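/- Let (M,d) be a metric space, f : M → ℝ Lipschitz of order α > 1 with constant C, and let z₀, …, z_l be a finite sequence in M with d(z_i, z_{i+1}) < ε·λ for all 0 ≤ i < l and Σ_{i=0}^{l−1} d(z_i, z_{i+1}) ≤ λ, where ε, λ > 0. Then |f(z₀) − f(z_l)| ≤ C·ε^(α−1)·λ^α. -/
import Mathlib


theorem stmt18 {M : Type*} [MetricSpace M] (f : M → ℝ) (C α ε lam : ℝ)
    (hC : 0 ≤ C) (hα : 1 < α) (hε : 0 < ε) (hlam : 0 < lam)
    (hf : ∀ x y : M, |f x - f y| ≤ C * dist x y ^ α)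
    (l : ℕ) (z : Fin (l + 1) → M)
    (hstep : ∀ i : Fin l, dist (z i.castSucc) (z i.succ) < ε * lam)
    (hlen : ∑ i : Fin l, dist (z i.castSucc) (z i.succ) ≤ lam) :
    |f (z 0) - f (z (Fin.last l))| ≤ C * ε ^ (α - 1) * lam ^ α := by
  have hεl : 0 < ε * lam := mul_pos hε hlam
  have hα1 : 0 < α - 1 := by linarith
  -- per-step bound
  have key : ∀ i : Fin l, |f (z i.castSucc) - f (z i.succ)| ≤
      C * ((ε * lam) ^ (α - 1) * dist (z i.castSucc) (z i.succ)) := by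
    intro i
    refine (hf _ _).trans ?_
    gcongr C * ?_
    set d := dist (z i.castSucc) (z i.succ) with hd
    have hd0 : 0 ≤ d := dist_nonneg
    rcases eq_or_lt_of_le hd0 with h | h
    · rw [← h, Real.zero_rpow (by linarith)]
      positivity
    · calc d ^ α = d ^ (α - 1) * d := by
            rw [← Real.rpow_add_one h.ne', sub_add_cancel]
        _ ≤ (ε * lam) ^ (α - 1) * d := by
            gcongr
            exact (hstep i).le
  -- ℕ-indexed versions
  set w : ℕ → ℝ := fun i => f (z ⟨min i l, by omega⟩) with hw
  set D : ℕ → ℝ := fun i => dist (z ⟨min i l, by omega⟩) (z ⟨min (i + 1) l, by omega⟩)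
    with hD'
  have e1 : ∀ (i : ℕ) (hil : i < l),
      (⟨min i l, by omega⟩ : Fin (l + 1)) = (⟨i, hil⟩ : Fin l).castSucc := by
    intro i hil; ext; simp [Fin.castSucc, Nat.min_eq_left hil.le]
  have e2 : ∀ (i : ℕ) (hil : i < l),
      (⟨min (i + 1) l, by omega⟩ : Fin (l + 1)) = (⟨i, hil⟩ : Fin l).succ := by
    intro i hil; ext; simp [Fin.succ, Nat.min_eq_left hil]
  have hD : ∀ i : Fin l, D i = dist (z i.castSucc) (z i.succ) := by
    intro i
    show dist (z ⟨min (↑i) l, _⟩) (z ⟨min (↑i + 1) l, _⟩) = _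
    rw [e1 i i.isLt, e2 i i.isLt]
  have h0 : w 0 = f (z 0) := by simp [hw]
  have hl : w l = f (z (Fin.last l)) := by simp [hw, Fin.last]
  have htel : |f (z 0) - f (z (Fin.last l))| ≤
      ∑ i ∈ Finset.range l, dist (w i) (w (i + 1)) := by
    rw [← h0, ← hl, ← Real.dist_eq]
    exact dist_le_range_sum_dist w l
  have hstep' : ∀ i ∈ Finset.range l,
      dist (w i) (w (i + 1)) ≤ C * ((ε * lam) ^ (α - 1) * D i) := by
    intro i hi
    have hil : i < l := Finset.mem_range.mp hi
    rw [hD ⟨i, hil⟩, Real.dist_eq, hw]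
    show |f (z ⟨min i l, _⟩) - f (z ⟨min (i + 1) l, _⟩)| ≤ _
    rw [e1 i hil, e2 i hil]
    exact key _
  have hlen' : ∑ i ∈ Finset.range l, D i ≤ lam := by
    rw [← Fin.sum_univ_eq_sum_range D l,
      Finset.sum_congr rfl fun (i : Fin l) _ => hD i]
    exact hlen
  have hsum : ∑ i ∈ Finset.range l, dist (w i) (w (i + 1)) ≤
      C * ((ε * lam) ^ (α - 1) * lam) := by
    calc ∑ i ∈ Finset.range l, dist (w i) (w (i + 1))
        ≤ ∑ i ∈ Finset.range l, C * ((ε * lam) ^ (α - 1) * D i) :=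
          Finset.sum_le_sum hstep'
      _ = C * ((ε * lam) ^ (α - 1) * ∑ i ∈ Finset.range l, D i) := by
          rw [← Finset.mul_sum, ← Finset.mul_sum]
      _ ≤ C * ((ε * lam) ^ (α - 1) * lam) := by gcongr
  have hfin : C * ((ε * lam) ^ (α - 1) * lam) = C * ε ^ (α - 1) * lam ^ α := by
    rw [Real.mul_rpow hε.le hlam.le, mul_assoc (ε ^ (α - 1)),
      ← Real.rpow_add_one hlam.ne', sub_add_cancel, mul_assoc]
  linarith [htel.trans hsum]
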